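/- arXiv:1801.01593 — 2 statements merged into one kernel-verified Lean document; each statement's English description precedes it below -/
import Mathlib

section
/- For any probability measure ν on ℝ with bounded support, if μ denotes its symmetrization (μ(A) = (ν(A)+ν(-A))/2), and for r ≥ 0 one defines ψ̄(r,s) = E_{x*∼ν} E_{z∼N(0,1)} log ∫ exp(√r·z·x + s·x·x* − (r/2)x²) dν(x), then ψ̄(r,−r) ≤ ψ̄(r,r). -/
open MeasureTheory ProbabilityTheory Set
open scoped ENNReal NNReal


open MeasureTheory ProbabilityTheory Real Set
open scoped ENNReal NNReal

noncomputable section AuxGauss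

lemma psb_gauss_int (f : ℝ → ℝ) (hf : Measurable f) :
    ∫ z, f z ∂(gaussianReal 0 1) = ∫ z, gaussianPDFReal 0 1 z * f z := by
  rw [gaussianReal_of_var_ne_zero _ one_ne_zero, gaussianPDF_def]
  have : (fun x => ENNReal.ofReal (gaussianPDFReal 0 1 x))
      = fun x => ((gaussianPDFReal 0 1 x).toNNReal : ℝ≥0∞) := rfl
  rw [this, integral_withDensity_eq_integral_smul
    (measurable_gaussianPDFReal 0 1).real_toNNReal f]
  congr 1; ext z
  simp [NNReal.smul_def, Real.coe_toNNReal _ (gaussianPDFReal_nonneg 0 1 z)]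

lemma psb_pdf_mul_exp (m t u : ℝ) :
    gaussianPDFReal m 1 u * Real.exp (t * u)
      = gaussianPDFReal (m + t) 1 u * Real.exp (t * m + t ^ 2 / 2) := by
  simp only [gaussianPDFReal]
  have h : -(u - m) ^ 2 / (2 * ((1:ℝ≥0):ℝ)) + t * u
      = -(u - (m + t)) ^ 2 / (2 * ((1:ℝ≥0):ℝ)) + (t * m + t ^ 2 / 2) := by
    push_cast; ring
  rw [mul_assoc, ← Real.exp_add, h, Real.exp_add, ← mul_assoc]

lemma psb_integrable_pdf_mul_exp (m t : ℝ) :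
    Integrable (fun u => gaussianPDFReal m 1 u * Real.exp (t * u)) := by
  simp_rw [psb_pdf_mul_exp m t]
  exact (integrable_gaussianPDFReal (m + t) 1).mul_const _

lemma psb_integral_pdf_mul_exp (m t : ℝ) :
    ∫ u, gaussianPDFReal m 1 u * Real.exp (t * u) = Real.exp (t * m + t ^ 2 / 2) := by
  simp_rw [psb_pdf_mul_exp m t]
  rw [integral_mul_const, integral_gaussianPDFReal_eq_one (m + t) one_ne_zero, one_mul]

lemma psb_integrable_exp (t : ℝ) :
    Integrable (fun z => Real.exp (t * z)) (gaussianReal 0 1) := by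
  rw [gaussianReal_of_var_ne_zero _ one_ne_zero, gaussianPDF_def]
  have : (fun x => ENNReal.ofReal (gaussianPDFReal 0 1 x))
      = fun x => ((gaussianPDFReal 0 1 x).toNNReal : ℝ≥0∞) := rfl
  rw [this, integrable_withDensity_iff_integrable_smul
    (measurable_gaussianPDFReal 0 1).real_toNNReal]
  exact (psb_integrable_pdf_mul_exp 0 t).congr (Filter.Eventually.of_forall fun z => by
    simp [NNReal.smul_def, Real.coe_toNNReal _ (gaussianPDFReal_nonneg 0 1 z)])

lemma psb_integrable_abs :
    Integrable (fun z : ℝ => |z|) (gaussianReal 0 1) := by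
  refine Integrable.mono' (g := fun z => Real.exp (1 * z) + Real.exp (-1 * z))
    ((psb_integrable_exp 1).add (psb_integrable_exp (-1)))
    measurable_abs.aestronglyMeasurable (Filter.Eventually.of_forall fun z => ?_)
  rw [Real.norm_eq_abs, abs_abs]
  have h1 : |z| ≤ Real.exp |z| := (Real.add_one_le_exp |z|).trans' (by linarith [abs_nonneg z])
  rcases abs_cases z with ⟨h, _⟩ | ⟨h, _⟩ <;> rw [h] at h1 <;>
    simp only [one_mul, neg_one_mul] <;>
    nlinarith [Real.exp_pos z, Real.exp_pos (-z)]

lemma psb_gauss_map_neg :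
    Measure.map (fun z : ℝ => -z) (gaussianReal 0 1) = gaussianReal 0 1 := by
  have h : (fun z : ℝ => -z) = fun z : ℝ => (-1) * z := by ext z; ring
  rw [h, gaussianReal_map_const_mul]
  norm_num

lemma psb_gauss_neg (f : ℝ → ℝ) (hf : Measurable f) :
    ∫ z, f (-z) ∂(gaussianReal 0 1) = ∫ z, f z ∂(gaussianReal 0 1) := by
  conv_rhs => rw [← psb_gauss_map_neg]
  rw [integral_map measurable_neg.aemeasurable hf.aestronglyMeasurable]

end AuxGauss

noncomputable section AuxZ

/-- The partition function `Z(y) = ∫ exp(√r y x - (r/2) x²) dν(x)`. -/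
def psbZ (ν : Measure ℝ) (r : ℝ) (y : ℝ) : ℝ :=
  ∫ x, Real.exp (Real.sqrt r * y * x - r / 2 * x ^ 2) ∂ν

lemma psb_sm_Z (ν : Measure ℝ) [SFinite ν] (r : ℝ) : StronglyMeasurable (psbZ ν r) := by
  have h : Continuous fun p : ℝ × ℝ =>
      Real.exp (Real.sqrt r * p.1 * p.2 - r / 2 * p.2 ^ 2) := by continuity
  exact h.stronglyMeasurable.integral_prod_right'

variable {ν : Measure ℝ} [IsProbabilityMeasure ν] {r K : ℝ}

lemma psb_exponent_bounds (hr : 0 ≤ r) (hK : 0 ≤ K) (y x : ℝ) (hx : |x| ≤ K) :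
    -(Real.sqrt r * K * |y|) - r / 2 * K ^ 2
      ≤ Real.sqrt r * y * x - r / 2 * x ^ 2 ∧
    Real.sqrt r * y * x - r / 2 * x ^ 2 ≤ Real.sqrt r * K * |y| := by
  have hs : 0 ≤ Real.sqrt r := Real.sqrt_nonneg r
  have h1 : |Real.sqrt r * y * x| ≤ Real.sqrt r * K * |y| := by
    rw [abs_mul, abs_mul, abs_of_nonneg hs]
    calc Real.sqrt r * |y| * |x| ≤ Real.sqrt r * |y| * K := by
          exact mul_le_mul_of_nonneg_left hx (by positivity)
      _ = Real.sqrt r * K * |y| := by ring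
  have h2 : x ^ 2 ≤ K ^ 2 := by
    rw [← sq_abs]
    exact pow_le_pow_left₀ (abs_nonneg x) hx 2
  have h3 : 0 ≤ r / 2 * x ^ 2 := by positivity
  have h4 : r / 2 * x ^ 2 ≤ r / 2 * K ^ 2 := by
    exact mul_le_mul_of_nonneg_left h2 (by linarith)
  constructor
  · nlinarith [abs_le.mp h1]
  · nlinarith [abs_le.mp h1]

lemma psb_integrable_Zint (hr : 0 ≤ r) (hK : 0 ≤ K) (hsupp : ∀ᵐ x ∂ν, |x| ≤ K) (y : ℝ) :
    Integrable (fun x => Real.exp (Real.sqrt r * y * x - r / 2 * x ^ 2)) ν := by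
  refine Integrable.mono' (g := fun _ => Real.exp (Real.sqrt r * K * |y|))
    (integrable_const _) (Continuous.aestronglyMeasurable (by continuity)) ?_
  filter_upwards [hsupp] with x hx
  rw [Real.norm_eq_abs, abs_of_nonneg (Real.exp_pos _).le]
  exact Real.exp_le_exp.mpr (psb_exponent_bounds hr hK y x hx).2

lemma psbZ_le (hr : 0 ≤ r) (hK : 0 ≤ K) (hsupp : ∀ᵐ x ∂ν, |x| ≤ K) (y : ℝ) :
    psbZ ν r y ≤ Real.exp (Real.sqrt r * K * |y|) := by
  have h := integral_mono_ae (psb_integrable_Zint hr hK hsupp y)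
    (integrable_const (Real.exp (Real.sqrt r * K * |y|)))
    (by filter_upwards [hsupp] with x hx
        exact Real.exp_le_exp.mpr (psb_exponent_bounds hr hK y x hx).2)
  simpa [psbZ] using h

lemma psbZ_ge (hr : 0 ≤ r) (hK : 0 ≤ K) (hsupp : ∀ᵐ x ∂ν, |x| ≤ K) (y : ℝ) :
    Real.exp (-(Real.sqrt r * K * |y|) - r / 2 * K ^ 2) ≤ psbZ ν r y := by
  have h := integral_mono_ae
    (integrable_const (Real.exp (-(Real.sqrt r * K * |y|) - r / 2 * K ^ 2)))
    (psb_integrable_Zint hr hK hsupp y)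
    (by filter_upwards [hsupp] with x hx
        exact Real.exp_le_exp.mpr (psb_exponent_bounds hr hK y x hx).1)
  simpa [psbZ] using h

lemma psbZ_pos (hr : 0 ≤ r) (hK : 0 ≤ K) (hsupp : ∀ᵐ x ∂ν, |x| ≤ K) (y : ℝ) :
    0 < psbZ ν r y :=
  lt_of_lt_of_le (Real.exp_pos _) (psbZ_ge hr hK hsupp y)

lemma psb_abs_log_Z (hr : 0 ≤ r) (hK : 0 ≤ K) (hsupp : ∀ᵐ x ∂ν, |x| ≤ K) (y : ℝ) :
    |Real.log (psbZ ν r y)| ≤ Real.sqrt r * K * |y| + r / 2 * K ^ 2 := by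
  have h0 : 0 ≤ r / 2 * K ^ 2 := by positivity
  rw [abs_le]
  constructor
  · have := Real.log_le_log (Real.exp_pos _) (psbZ_ge hr hK hsupp y)
    rw [Real.log_exp] at this
    linarith
  · have := Real.log_le_log (psbZ_pos hr hK hsupp y) (psbZ_le hr hK hsupp y)
    rw [Real.log_exp] at this
    linarith

end AuxZ

noncomputable section AuxMain

lemma psb_pdf_shift (m u : ℝ) :
    gaussianPDFReal m 1 u = gaussianPDFReal 0 1 u * Real.exp (m * u - m ^ 2 / 2) := by
  simp only [gaussianPDFReal]
  rw [mul_assoc _ (Real.exp _) (Real.exp _), ← Real.exp_add]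
  congr 1
  push_cast
  ring

lemma psb_pdf_upper {M : ℝ} (hM : 0 ≤ M) (m u : ℝ) (hm : |m| ≤ M) :
    gaussianPDFReal m 1 u
      ≤ gaussianPDFReal 0 1 u * (Real.exp (M * u) + Real.exp (-M * u)) := by
  rw [psb_pdf_shift]
  have h0 : 0 < gaussianPDFReal 0 1 u := gaussianPDFReal_pos 0 1 u one_ne_zero
  refine mul_le_mul_of_nonneg_left ?_ h0.le
  have h1 : m * u - m ^ 2 / 2 ≤ M * |u| := by
    nlinarith [abs_le.mp hm, abs_nonneg u, le_abs_self u, neg_abs_le u, sq_nonneg m]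
  calc Real.exp (m * u - m ^ 2 / 2) ≤ Real.exp (M * |u|) := Real.exp_le_exp.mpr h1
    _ ≤ Real.exp (M * u) + Real.exp (-M * u) := by
        rcases abs_cases u with ⟨h, _⟩ | ⟨h, _⟩ <;> rw [h]
        · nlinarith [Real.exp_pos (-M * u)]
        · have he : M * -u = -M * u := by ring
          rw [he]
          nlinarith [Real.exp_pos (M * u)]

variable {ν : Measure ℝ} [IsProbabilityMeasure ν] {r K : ℝ}

lemma psb_ratio_nonneg (hr : 0 ≤ r) (hK : 0 ≤ K) (hsupp : ∀ᵐ x ∂ν, |x| ≤ K) (u : ℝ) :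
    0 ≤ psbZ ν r (-u) / psbZ ν r u :=
  div_nonneg (psbZ_pos hr hK hsupp _).le (psbZ_pos hr hK hsupp _).le

lemma psb_ratio_le (hr : 0 ≤ r) (hK : 0 ≤ K) (hsupp : ∀ᵐ x ∂ν, |x| ≤ K) (u : ℝ) :
    psbZ ν r (-u) / psbZ ν r u
      ≤ Real.exp (2 * (Real.sqrt r * K) * |u| + r / 2 * K ^ 2) := by
  have h1 : psbZ ν r (-u) ≤ Real.exp (Real.sqrt r * K * |u|) := by
    have := psbZ_le hr hK hsupp (-u); rwa [abs_neg] at this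
  have h2 : Real.exp (-(Real.sqrt r * K * |u|) - r / 2 * K ^ 2) ≤ psbZ ν r u :=
    psbZ_ge hr hK hsupp u
  calc psbZ ν r (-u) / psbZ ν r u
      ≤ Real.exp (Real.sqrt r * K * |u|)
          / Real.exp (-(Real.sqrt r * K * |u|) - r / 2 * K ^ 2) :=
        div_le_div₀ (Real.exp_pos _).le h1 (Real.exp_pos _) h2
    _ = Real.exp (2 * (Real.sqrt r * K) * |u| + r / 2 * K ^ 2) := by
        rw [← Real.exp_sub]; congr 1; ring

end AuxMain

noncomputable section AuxC

variable {ν : Measure ℝ} [IsProbabilityMeasure ν] {r K : ℝ}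

lemma psb_meas_ratio (ν : Measure ℝ) [SFinite ν] (r : ℝ) :
    Measurable (fun u => psbZ ν r (-u) / psbZ ν r u) :=
  ((psb_sm_Z ν r).measurable.comp measurable_neg).div (psb_sm_Z ν r).measurable

/-- Per-`xs` reduction of the Gaussian integral of the ratio to a Lebesgue integral. -/
lemma psb_Wi_eq (r : ℝ) (xs : ℝ) [SFinite ν] :
    ∫ z, psbZ ν r (-(Real.sqrt r * xs + z)) / psbZ ν r (Real.sqrt r * xs + z)
        ∂(gaussianReal 0 1)
      = ∫ u, gaussianPDFReal (Real.sqrt r * xs) 1 u * (psbZ ν r (-u) / psbZ ν r u) := by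
  have hm : Measurable fun z : ℝ =>
      psbZ ν r (-(Real.sqrt r * xs + z)) / psbZ ν r (Real.sqrt r * xs + z) :=
    (psb_meas_ratio ν r).comp (measurable_const.add measurable_id)
  rw [psb_gauss_int (fun z => psbZ ν r (-(Real.sqrt r * xs + z))
    / psbZ ν r (Real.sqrt r * xs + z)) hm]
  have h1 : ∀ z, gaussianPDFReal 0 1 z
        * (psbZ ν r (-(Real.sqrt r * xs + z)) / psbZ ν r (Real.sqrt r * xs + z))
      = (fun u => gaussianPDFReal (Real.sqrt r * xs) 1 u * (psbZ ν r (-u) / psbZ ν r u))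
          (z + Real.sqrt r * xs) := by
    intro z
    simp only
    rw [gaussianPDFReal_add, sub_self, add_comm z (Real.sqrt r * xs)]
  simp_rw [h1]
  exact integral_add_right_eq_self
    (fun u => gaussianPDFReal (Real.sqrt r * xs) 1 u * (psbZ ν r (-u) / psbZ ν r u)) _

lemma psb_pdf_meas (r : ℝ) :
    Measurable (fun p : ℝ × ℝ => gaussianPDFReal (Real.sqrt r * p.1) 1 p.2) := by
  simp only [gaussianPDFReal]
  fun_prop

/-- The mixture identity `∫ pdf(√r xs) u dν(xs) = φ(u) Z(u)`. -/
lemma psb_mixture (hr : 0 ≤ r) (u : ℝ) :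
    ∫ xs, gaussianPDFReal (Real.sqrt r * xs) 1 u ∂ν
      = gaussianPDFReal 0 1 u * psbZ ν r u := by
  have h : ∀ xs, gaussianPDFReal (Real.sqrt r * xs) 1 u
      = gaussianPDFReal 0 1 u * Real.exp (Real.sqrt r * u * xs - r / 2 * xs ^ 2) := by
    intro xs
    rw [psb_pdf_shift]
    congr 2
    have : Real.sqrt r ^ 2 = r := Real.sq_sqrt hr
    nlinarith [this]
  simp_rw [h]
  rw [integral_const_mul]
  rfl

lemma psb_pdf_neg_eq (hr : 0 ≤ r) (x u : ℝ) :
    gaussianPDFReal 0 1 u * Real.exp (Real.sqrt r * (-u) * x - r / 2 * x ^ 2)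
      = gaussianPDFReal (-(Real.sqrt r * x)) 1 u := by
  conv_rhs => rw [psb_pdf_shift]
  congr 1
  rw [Real.exp_eq_exp]
  nlinarith [Real.sq_sqrt hr]

end AuxC

noncomputable section AuxC2

variable {ν : Measure ℝ} [IsProbabilityMeasure ν] {r K : ℝ}

lemma psb_exp_abs_le (t u : ℝ) (ht : 0 ≤ t) :
    Real.exp (t * |u|) ≤ Real.exp (t * u) + Real.exp (-t * u) := by
  rcases abs_cases u with ⟨h, _⟩ | ⟨h, _⟩ <;> rw [h]
  · nlinarith [Real.exp_pos (-t * u)]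
  · have he : t * -u = -t * u := by ring
    rw [he]
    nlinarith [Real.exp_pos (t * u)]

lemma psb_F_int_inner (hr : 0 ≤ r) (hK : 0 ≤ K) (hsupp : ∀ᵐ x ∂ν, |x| ≤ K) (xs : ℝ) :
    Integrable (fun u => gaussianPDFReal (Real.sqrt r * xs) 1 u
      * (psbZ ν r (-u) / psbZ ν r u)) := by
  set t := 2 * (Real.sqrt r * K) with ht_def
  have ht : 0 ≤ t := by positivity
  refine Integrable.mono' (g := fun u => Real.exp (r / 2 * K ^ 2) *
      (gaussianPDFReal (Real.sqrt r * xs) 1 u * Real.exp (t * u)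
        + gaussianPDFReal (Real.sqrt r * xs) 1 u * Real.exp (-t * u)))
    (((psb_integrable_pdf_mul_exp _ t).add (psb_integrable_pdf_mul_exp _ (-t))).const_mul _)
    ((measurable_gaussianPDFReal _ _).mul (psb_meas_ratio ν r)).aestronglyMeasurable
    (Filter.Eventually.of_forall fun u => ?_)
  have h0 : 0 ≤ gaussianPDFReal (Real.sqrt r * xs) 1 u := gaussianPDFReal_nonneg _ _ _
  have h1 : 0 ≤ psbZ ν r (-u) / psbZ ν r u := psb_ratio_nonneg hr hK hsupp u
  rw [Real.norm_eq_abs, abs_of_nonneg (mul_nonneg h0 h1)]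
  have h2 : psbZ ν r (-u) / psbZ ν r u ≤ Real.exp (t * |u| + r / 2 * K ^ 2) := by
    have := psb_ratio_le hr hK hsupp u
    rwa [show 2 * (Real.sqrt r * K) * |u| + r / 2 * K ^ 2 = t * |u| + r / 2 * K ^ 2 by
      rw [ht_def]] at this
  calc gaussianPDFReal (Real.sqrt r * xs) 1 u * (psbZ ν r (-u) / psbZ ν r u)
      ≤ gaussianPDFReal (Real.sqrt r * xs) 1 u * Real.exp (t * |u| + r / 2 * K ^ 2) :=
        mul_le_mul_of_nonneg_left h2 h0
    _ ≤ Real.exp (r / 2 * K ^ 2) *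
          (gaussianPDFReal (Real.sqrt r * xs) 1 u * Real.exp (t * u)
            + gaussianPDFReal (Real.sqrt r * xs) 1 u * Real.exp (-t * u)) := by
        rw [Real.exp_add]
        have := psb_exp_abs_le t u ht
        nlinarith [Real.exp_pos (r / 2 * K ^ 2), psb_exp_abs_le t u ht,
          mul_le_mul_of_nonneg_left (psb_exp_abs_le t u ht) h0]

lemma psb_F_prod_int (hr : 0 ≤ r) (hK : 0 ≤ K) (hsupp : ∀ᵐ x ∂ν, |x| ≤ K) :
    Integrable (Function.uncurry fun xs u =>
      gaussianPDFReal (Real.sqrt r * xs) 1 u * (psbZ ν r (-u) / psbZ ν r u))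
      (ν.prod (volume : Measure ℝ)) := by
  set t := 2 * (Real.sqrt r * K) with ht_def
  have ht : 0 ≤ t := by positivity
  have hmeas : Measurable (Function.uncurry fun xs u =>
      gaussianPDFReal (Real.sqrt r * xs) 1 u * (psbZ ν r (-u) / psbZ ν r u)) :=
    (psb_pdf_meas r).mul ((psb_meas_ratio ν r).comp measurable_snd)
  rw [integrable_prod_iff hmeas.aestronglyMeasurable]
  constructor
  · exact Filter.Eventually.of_forall fun xs => psb_F_int_inner hr hK hsupp xs
  · set C : ℝ := Real.exp (r / 2 * K ^ 2) *
      (Real.exp (t * (Real.sqrt r * K) + t ^ 2 / 2)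
        + Real.exp (t * (Real.sqrt r * K) + t ^ 2 / 2)) with hC_def
    refine Integrable.mono' (g := fun _ => C) (integrable_const _)
      (hmeas.norm.stronglyMeasurable.integral_prod_right').aestronglyMeasurable ?_
    filter_upwards [hsupp] with xs hxs
    have hint := psb_F_int_inner hr hK hsupp xs
    have hbound : ∫ u, ‖gaussianPDFReal (Real.sqrt r * xs) 1 u
        * (psbZ ν r (-u) / psbZ ν r u)‖ ≤ C := by
      have hgle : ∫ u, Real.exp (r / 2 * K ^ 2) *
          (gaussianPDFReal (Real.sqrt r * xs) 1 u * Real.exp (t * u)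
            + gaussianPDFReal (Real.sqrt r * xs) 1 u * Real.exp (-t * u)) ≤ C := by
        rw [integral_const_mul, integral_add (psb_integrable_pdf_mul_exp _ t)
          (psb_integrable_pdf_mul_exp _ (-t)), psb_integral_pdf_mul_exp,
          psb_integral_pdf_mul_exp, hC_def]
        have hxs1 : t * (Real.sqrt r * xs) ≤ t * (Real.sqrt r * K) := by
          have : Real.sqrt r * xs ≤ Real.sqrt r * K :=
            mul_le_mul_of_nonneg_left (le_trans (le_abs_self xs) hxs) (Real.sqrt_nonneg r)
          exact mul_le_mul_of_nonneg_left this ht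
        have hxs2 : -t * (Real.sqrt r * xs) ≤ t * (Real.sqrt r * K) := by
          have h1 : -(Real.sqrt r * xs) ≤ Real.sqrt r * |xs| := by
            rw [show Real.sqrt r * |xs| = |Real.sqrt r * xs| by
              rw [abs_mul, abs_of_nonneg (Real.sqrt_nonneg r)]]
            exact neg_le_abs _
          have h2 : Real.sqrt r * |xs| ≤ Real.sqrt r * K :=
            mul_le_mul_of_nonneg_left hxs (Real.sqrt_nonneg r)
          nlinarith
        have e1 : Real.exp (t * (Real.sqrt r * xs) + t ^ 2 / 2)
            ≤ Real.exp (t * (Real.sqrt r * K) + t ^ 2 / 2) :=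
          Real.exp_le_exp.mpr (by linarith)
        have e2 : Real.exp (-t * (Real.sqrt r * xs) + (-t) ^ 2 / 2)
            ≤ Real.exp (t * (Real.sqrt r * K) + t ^ 2 / 2) :=
          Real.exp_le_exp.mpr (by nlinarith)
        nlinarith [Real.exp_pos (r / 2 * K ^ 2)]
      refine le_trans ?_ hgle
      refine integral_mono_ae hint.norm ((((psb_integrable_pdf_mul_exp _ t).add
        (psb_integrable_pdf_mul_exp _ (-t))).const_mul _))
        (Filter.Eventually.of_forall fun u => ?_)
      -- same pointwise bound as in psb_F_int_inner
      have h0 : 0 ≤ gaussianPDFReal (Real.sqrt r * xs) 1 u := gaussianPDFReal_nonneg _ _ _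
      have h1 : 0 ≤ psbZ ν r (-u) / psbZ ν r u := psb_ratio_nonneg hr hK hsupp u
      dsimp only
      rw [Real.norm_eq_abs, abs_of_nonneg (mul_nonneg h0 h1)]
      have h2 : psbZ ν r (-u) / psbZ ν r u ≤ Real.exp (t * |u| + r / 2 * K ^ 2) := by
        have := psb_ratio_le hr hK hsupp u
        rwa [show 2 * (Real.sqrt r * K) * |u| + r / 2 * K ^ 2 = t * |u| + r / 2 * K ^ 2 by
          rw [ht_def]] at this
      calc gaussianPDFReal (Real.sqrt r * xs) 1 u * (psbZ ν r (-u) / psbZ ν r u)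
          ≤ gaussianPDFReal (Real.sqrt r * xs) 1 u * Real.exp (t * |u| + r / 2 * K ^ 2) :=
            mul_le_mul_of_nonneg_left h2 h0
        _ ≤ Real.exp (r / 2 * K ^ 2) *
              (gaussianPDFReal (Real.sqrt r * xs) 1 u * Real.exp (t * u)
                + gaussianPDFReal (Real.sqrt r * xs) 1 u * Real.exp (-t * u)) := by
            rw [Real.exp_add]
            nlinarith [Real.exp_pos (r / 2 * K ^ 2),
              mul_le_mul_of_nonneg_left (psb_exp_abs_le t u ht) h0]
    rw [Real.norm_eq_abs, abs_of_nonneg (integral_nonneg fun u => norm_nonneg _)]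
    exact hbound

end AuxC2

noncomputable section AuxC3

variable {ν : Measure ℝ} [IsProbabilityMeasure ν] {r K : ℝ}

lemma psb_G_meas (r : ℝ) :
    Measurable (Function.uncurry fun (u x : ℝ) =>
      gaussianPDFReal (-(Real.sqrt r * x)) 1 u) := by
  simp only [gaussianPDFReal, Function.uncurry]
  fun_prop

lemma psb_pdf_le_const (m u : ℝ) :
    gaussianPDFReal m 1 u ≤ (Real.sqrt (2 * π * (1 : ℝ≥0)))⁻¹ := by
  simp only [gaussianPDFReal]
  have h1 : Real.exp (-(u - m) ^ 2 / (2 * ((1 : ℝ≥0) : ℝ))) ≤ 1 := by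
    rw [Real.exp_le_one_iff]
    push_cast
    nlinarith [sq_nonneg (u - m)]
  have h2 : (0:ℝ) < (Real.sqrt (2 * π * ((1:ℝ≥0):ℝ)))⁻¹ := by
    rw [inv_pos]
    refine Real.sqrt_pos.mpr ?_
    have := Real.pi_pos
    push_cast
    nlinarith
  nlinarith

lemma psb_G_prod_int (hr : 0 ≤ r) (hK : 0 ≤ K) (hsupp : ∀ᵐ x ∂ν, |x| ≤ K) :
    Integrable (Function.uncurry fun (u x : ℝ) =>
      gaussianPDFReal (-(Real.sqrt r * x)) 1 u) ((volume : Measure ℝ).prod ν) := by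
  set M := Real.sqrt r * K with hM_def
  have hM : 0 ≤ M := by positivity
  rw [integrable_prod_iff (psb_G_meas r).aestronglyMeasurable]
  constructor
  · refine Filter.Eventually.of_forall fun u => ?_
    refine Integrable.mono' (g := fun _ => (Real.sqrt (2 * π * (1 : ℝ≥0)))⁻¹)
      (integrable_const _) ?_ (Filter.Eventually.of_forall fun x => ?_)
    · exact ((psb_G_meas r).comp (measurable_const.prodMk measurable_id)).aestronglyMeasurable
    · simp only [Function.uncurry_apply_pair]
      rw [Real.norm_eq_abs, abs_of_nonneg (gaussianPDFReal_nonneg _ _ _)]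
      exact psb_pdf_le_const _ _
  · refine Integrable.mono' (g := fun u => gaussianPDFReal 0 1 u * Real.exp (M * u)
        + gaussianPDFReal 0 1 u * Real.exp (-M * u))
      ((psb_integrable_pdf_mul_exp 0 M).add (psb_integrable_pdf_mul_exp 0 (-M)))
      ((psb_G_meas r).norm.stronglyMeasurable.integral_prod_right').aestronglyMeasurable
      (Filter.Eventually.of_forall fun u => ?_)
    rw [Real.norm_eq_abs, abs_of_nonneg (integral_nonneg fun x => norm_nonneg _)]
    have hb : ∀ᵐ x ∂ν, ‖gaussianPDFReal (-(Real.sqrt r * x)) 1 u‖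
        ≤ gaussianPDFReal 0 1 u * (Real.exp (M * u) + Real.exp (-M * u)) := by
      filter_upwards [hsupp] with x hx
      rw [Real.norm_eq_abs, abs_of_nonneg (gaussianPDFReal_nonneg _ _ _)]
      refine psb_pdf_upper hM _ u ?_
      rw [abs_neg, abs_mul, abs_of_nonneg (Real.sqrt_nonneg r), hM_def]
      exact mul_le_mul_of_nonneg_left hx (Real.sqrt_nonneg r)
    have hint : Integrable (fun x => ‖gaussianPDFReal (-(Real.sqrt r * x)) 1 u‖) ν := by
      refine Integrable.mono' (g := fun _ => (Real.sqrt (2 * π * (1 : ℝ≥0)))⁻¹)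
        (integrable_const _) ?_ (Filter.Eventually.of_forall fun x => ?_)
      · exact ((psb_G_meas r).comp
          (measurable_const.prodMk measurable_id)).norm.aestronglyMeasurable
      · rw [norm_norm, Real.norm_eq_abs, abs_of_nonneg (gaussianPDFReal_nonneg _ _ _)]
        exact psb_pdf_le_const _ _
    calc ∫ x, ‖gaussianPDFReal (-(Real.sqrt r * x)) 1 u‖ ∂ν
        ≤ ∫ _x, gaussianPDFReal 0 1 u * (Real.exp (M * u) + Real.exp (-M * u)) ∂ν :=
          integral_mono_ae hint (integrable_const _) hb
      _ = gaussianPDFReal 0 1 u * Real.exp (M * u)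
            + gaussianPDFReal 0 1 u * Real.exp (-M * u) := by
          rw [integral_const]
          simp [measure_univ]
          ring

lemma psb_final (hr : 0 ≤ r) (hK : 0 ≤ K) (hsupp : ∀ᵐ x ∂ν, |x| ≤ K) :
    ∫ u, gaussianPDFReal 0 1 u * psbZ ν r (-u) = 1 := by
  have hpt : ∀ u, gaussianPDFReal 0 1 u * psbZ ν r (-u)
      = ∫ x, gaussianPDFReal (-(Real.sqrt r * x)) 1 u ∂ν := by
    intro u
    rw [psbZ, ← integral_const_mul]
    exact integral_congr_ae (Filter.Eventually.of_forall fun x => psb_pdf_neg_eq hr x u)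
  simp_rw [hpt]
  rw [integral_integral_swap (psb_G_prod_int hr hK hsupp)]
  have : ∀ x : ℝ, ∫ u, gaussianPDFReal (-(Real.sqrt r * x)) 1 u = 1 := fun x =>
    integral_gaussianPDFReal_eq_one _ one_ne_zero
  simp_rw [this]
  simp [measure_univ]

lemma psb_intW_eq_one (hr : 0 ≤ r) (hK : 0 ≤ K) (hsupp : ∀ᵐ x ∂ν, |x| ≤ K) :
    ∫ xs, ∫ z, psbZ ν r (-(Real.sqrt r * xs + z)) / psbZ ν r (Real.sqrt r * xs + z)
      ∂(gaussianReal 0 1) ∂ν = 1 := by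
  calc ∫ xs, ∫ z, psbZ ν r (-(Real.sqrt r * xs + z)) / psbZ ν r (Real.sqrt r * xs + z)
        ∂(gaussianReal 0 1) ∂ν
      = ∫ xs, (∫ u, gaussianPDFReal (Real.sqrt r * xs) 1 u
          * (psbZ ν r (-u) / psbZ ν r u)) ∂ν :=
        integral_congr_ae (Filter.Eventually.of_forall fun xs => psb_Wi_eq r xs)
    _ = ∫ u, ∫ xs, gaussianPDFReal (Real.sqrt r * xs) 1 u
          * (psbZ ν r (-u) / psbZ ν r u) ∂ν :=
        integral_integral_swap (psb_F_prod_int hr hK hsupp)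
    _ = ∫ u, gaussianPDFReal 0 1 u * psbZ ν r (-u) := by
        refine integral_congr_ae (Filter.Eventually.of_forall fun u => ?_)
        dsimp only
        rw [integral_mul_const, psb_mixture hr u]
        have hz : psbZ ν r u ≠ 0 := (psbZ_pos hr hK hsupp u).ne'
        field_simp
    _ = 1 := psb_final hr hK hsupp

end AuxC3

noncomputable section AuxD

variable {ν : Measure ℝ} [IsProbabilityMeasure ν] {r K : ℝ}

lemma psb_gauss_mgf (t : ℝ) :
    ∫ z, Real.exp (t * z) ∂(gaussianReal 0 1) = Real.exp (t ^ 2 / 2) := by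
  rw [psb_gauss_int (fun z => Real.exp (t * z)) (by fun_prop)]
  have := psb_integral_pdf_mul_exp 0 t
  rw [this]
  norm_num

lemma psb_int_log_of (hr : 0 ≤ r) (hK : 0 ≤ K) (hsupp : ∀ᵐ x ∂ν, |x| ≤ K)
    (g : ℝ → ℝ) (hg : Measurable g) (a : ℝ) (hga : ∀ z, |g z| ≤ |a| + |z|) :
    Integrable (fun z => Real.log (psbZ ν r (g z))) (gaussianReal 0 1) ∧
    |∫ z, Real.log (psbZ ν r (g z)) ∂(gaussianReal 0 1)|
      ≤ Real.sqrt r * K * (|a| + ∫ z, |z| ∂(gaussianReal 0 1)) + r / 2 * K ^ 2 := by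
  have hc : 0 ≤ Real.sqrt r * K := by positivity
  have hGint : Integrable (fun z : ℝ =>
      (Real.sqrt r * K * |a| + r / 2 * K ^ 2) + Real.sqrt r * K * |z|)
      (gaussianReal 0 1) :=
    (integrable_const _).add (psb_integrable_abs.const_mul _)
  have hmeas : AEStronglyMeasurable (fun z => Real.log (psbZ ν r (g z)))
      (gaussianReal 0 1) :=
    (Real.measurable_log.comp ((psb_sm_Z ν r).measurable.comp hg)).aestronglyMeasurable
  have hbd : ∀ z, ‖Real.log (psbZ ν r (g z))‖
      ≤ (Real.sqrt r * K * |a| + r / 2 * K ^ 2) + Real.sqrt r * K * |z| := by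
    intro z
    rw [Real.norm_eq_abs]
    have h1 := psb_abs_log_Z hr hK hsupp (g z)
    have h2 := hga z
    nlinarith [mul_le_mul_of_nonneg_left h2 hc]
  have hint : Integrable (fun z => Real.log (psbZ ν r (g z))) (gaussianReal 0 1) :=
    Integrable.mono' hGint hmeas (Filter.Eventually.of_forall hbd)
  refine ⟨hint, ?_⟩
  have h3 : |∫ z, Real.log (psbZ ν r (g z)) ∂(gaussianReal 0 1)|
      ≤ ∫ z, ((Real.sqrt r * K * |a| + r / 2 * K ^ 2) + Real.sqrt r * K * |z|)
          ∂(gaussianReal 0 1) := by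
    rw [← Real.norm_eq_abs]
    exact norm_integral_le_of_norm_le hGint (Filter.Eventually.of_forall hbd)
  have h4 : ∫ z, ((Real.sqrt r * K * |a| + r / 2 * K ^ 2) + Real.sqrt r * K * |z|)
        ∂(gaussianReal 0 1)
      = Real.sqrt r * K * (|a| + ∫ z, |z| ∂(gaussianReal 0 1)) + r / 2 * K ^ 2 := by
    rw [integral_add (integrable_const _) (psb_integrable_abs.const_mul _),
      integral_const, integral_const_mul]
    simp [measure_univ]
    ring
  linarith [h3, h4.le, h4.ge]

end AuxD

set_option maxHeartbeats 1000000 in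
/-- Asymmetry inequality for the averaged scalar free entropy:
`ψ̄(r, -r) ≤ ψ̄(r, r)` for a bounded-support prior `ν`. -/
theorem stmt_0
    (ν : Measure ℝ) [IsProbabilityMeasure ν] (K : ℝ)
    (hsupp : ∀ᵐ x ∂ν, |x| ≤ K)
    (μ : Measure ℝ)
    (hμ : μ = (2 : ℝ≥0∞)⁻¹ • (ν + Measure.map (fun x => -x) ν))
    (ψbar : ℝ → ℝ → ℝ)
    (hψbar : ∀ r s, ψbar r s =
      ∫ xs, ∫ z,
        Real.log (∫ x, Real.exp (Real.sqrt r * z * x + s * x * xs - r / 2 * x ^ 2) ∂ν)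
        ∂(gaussianReal 0 1) ∂ν)
    (r : ℝ) (hr : 0 ≤ r) :
    ψbar r (-r) ≤ ψbar r r := by
  obtain ⟨x0, hx0⟩ := hsupp.exists
  have hK : 0 ≤ K := le_trans (abs_nonneg x0) hx0
  have hrr : Real.sqrt r * Real.sqrt r = r := Real.mul_self_sqrt hr
  have hc : 0 ≤ Real.sqrt r * K := by positivity
  -- Step A: rewrite ψbar r r
  have hplus : ψbar r r
      = ∫ xs, (∫ z, Real.log (psbZ ν r (Real.sqrt r * xs + z)) ∂(gaussianReal 0 1)) ∂ν := by
    rw [hψbar]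
    refine integral_congr_ae (Filter.Eventually.of_forall fun xs => ?_)
    refine integral_congr_ae (Filter.Eventually.of_forall fun z => ?_)
    refine congrArg Real.log ?_
    simp only [psbZ]
    refine integral_congr_ae (Filter.Eventually.of_forall fun x => ?_)
    refine congrArg Real.exp ?_
    linear_combination (-(x * xs)) * hrr
  -- Step A': rewrite ψbar r (-r)
  have hminus : ψbar r (-r)
      = ∫ xs, (∫ z, Real.log (psbZ ν r (-(Real.sqrt r * xs + z))) ∂(gaussianReal 0 1)) ∂ν := by
    rw [hψbar]
    refine integral_congr_ae (Filter.Eventually.of_forall fun xs => ?_)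
    have e1 : (∫ z, Real.log (∫ x, Real.exp (Real.sqrt r * z * x + (-r) * x * xs
          - r / 2 * x ^ 2) ∂ν) ∂(gaussianReal 0 1))
        = ∫ z, Real.log (psbZ ν r (z - Real.sqrt r * xs)) ∂(gaussianReal 0 1) := by
      refine integral_congr_ae (Filter.Eventually.of_forall fun z => ?_)
      refine congrArg Real.log ?_
      simp only [psbZ]
      refine integral_congr_ae (Filter.Eventually.of_forall fun x => ?_)
      refine congrArg Real.exp ?_
      linear_combination (x * xs) * hrr
    dsimp only
    rw [e1]
    have e2 : ∫ z, Real.log (psbZ ν r (-z - Real.sqrt r * xs)) ∂(gaussianReal 0 1)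
        = ∫ z, Real.log (psbZ ν r (z - Real.sqrt r * xs)) ∂(gaussianReal 0 1) := by
      simpa using psb_gauss_neg (fun z => Real.log (psbZ ν r (z - Real.sqrt r * xs)))
        (Real.measurable_log.comp ((psb_sm_Z ν r).measurable.comp (by fun_prop)))
    rw [← e2]
    refine integral_congr_ae (Filter.Eventually.of_forall fun z => ?_)
    have : -z - Real.sqrt r * xs = -(Real.sqrt r * xs + z) := by ring
    dsimp only
    rw [this]
  -- inner integrability and bounds
  have hIp : ∀ xs : ℝ,
      Integrable (fun z => Real.log (psbZ ν r (Real.sqrt r * xs + z))) (gaussianReal 0 1) ∧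
      |∫ z, Real.log (psbZ ν r (Real.sqrt r * xs + z)) ∂(gaussianReal 0 1)|
        ≤ Real.sqrt r * K * (|Real.sqrt r * xs| + ∫ z, |z| ∂(gaussianReal 0 1))
            + r / 2 * K ^ 2 :=
    fun xs => psb_int_log_of hr hK hsupp (fun z => Real.sqrt r * xs + z) (by fun_prop)
      (Real.sqrt r * xs) (fun z => abs_add_le _ _)
  have hIm : ∀ xs : ℝ,
      Integrable (fun z => Real.log (psbZ ν r (-(Real.sqrt r * xs + z)))) (gaussianReal 0 1) ∧
      |∫ z, Real.log (psbZ ν r (-(Real.sqrt r * xs + z))) ∂(gaussianReal 0 1)|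
        ≤ Real.sqrt r * K * (|Real.sqrt r * xs| + ∫ z, |z| ∂(gaussianReal 0 1))
            + r / 2 * K ^ 2 :=
    fun xs => psb_int_log_of hr hK hsupp (fun z => -(Real.sqrt r * xs + z)) (by fun_prop)
      (Real.sqrt r * xs) (fun z => by rw [abs_neg]; exact abs_add_le _ _)
  -- the ratio function: integrability and bound
  have hW : ∀ xs : ℝ,
      Integrable (fun z => psbZ ν r (-(Real.sqrt r * xs + z))
        / psbZ ν r (Real.sqrt r * xs + z)) (gaussianReal 0 1) ∧
      |∫ z, psbZ ν r (-(Real.sqrt r * xs + z)) / psbZ ν r (Real.sqrt r * xs + z)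
          ∂(gaussianReal 0 1)|
        ≤ Real.exp (2 * (Real.sqrt r * K) * (Real.sqrt r * |xs|) + r / 2 * K ^ 2)
            * (2 * Real.exp ((2 * (Real.sqrt r * K)) ^ 2 / 2)) := by
    intro xs
    have ht : 0 ≤ 2 * (Real.sqrt r * K) := by positivity
    have hC : 0 ≤ Real.exp (2 * (Real.sqrt r * K) * (Real.sqrt r * |xs|) + r / 2 * K ^ 2) :=
      (Real.exp_pos _).le
    have hgint : Integrable (fun z =>
        Real.exp (2 * (Real.sqrt r * K) * (Real.sqrt r * |xs|) + r / 2 * K ^ 2)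
          * (Real.exp (2 * (Real.sqrt r * K) * z) + Real.exp (-(2 * (Real.sqrt r * K)) * z)))
        (gaussianReal 0 1) :=
      ((psb_integrable_exp _).add (psb_integrable_exp _)).const_mul _
    have hmeas : AEStronglyMeasurable (fun z => psbZ ν r (-(Real.sqrt r * xs + z))
        / psbZ ν r (Real.sqrt r * xs + z)) (gaussianReal 0 1) :=
      ((psb_meas_ratio ν r).comp (by fun_prop : Measurable fun z : ℝ =>
        Real.sqrt r * xs + z)).aestronglyMeasurable
    have hbd : ∀ z : ℝ, ‖psbZ ν r (-(Real.sqrt r * xs + z))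
          / psbZ ν r (Real.sqrt r * xs + z)‖
        ≤ Real.exp (2 * (Real.sqrt r * K) * (Real.sqrt r * |xs|) + r / 2 * K ^ 2)
            * (Real.exp (2 * (Real.sqrt r * K) * z)
              + Real.exp (-(2 * (Real.sqrt r * K)) * z)) := by
      intro z
      rw [Real.norm_eq_abs, abs_of_nonneg (psb_ratio_nonneg hr hK hsupp _)]
      have h1 := psb_ratio_le hr hK hsupp (Real.sqrt r * xs + z)
      have h2 : |Real.sqrt r * xs + z| ≤ Real.sqrt r * |xs| + |z| := by
        refine (abs_add_le _ _).trans ?_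
        rw [abs_mul, abs_of_nonneg (Real.sqrt_nonneg r)]
      have h3 : psbZ ν r (-(Real.sqrt r * xs + z)) / psbZ ν r (Real.sqrt r * xs + z)
          ≤ Real.exp (2 * (Real.sqrt r * K) * (Real.sqrt r * |xs|) + r / 2 * K ^ 2)
              * Real.exp (2 * (Real.sqrt r * K) * |z|) := by
        rw [← Real.exp_add]
        refine h1.trans (Real.exp_le_exp.mpr ?_)
        nlinarith [mul_le_mul_of_nonneg_left h2 ht]
      refine h3.trans (mul_le_mul_of_nonneg_left ?_ hC)
      exact psb_exp_abs_le _ z ht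
    have hint : Integrable (fun z => psbZ ν r (-(Real.sqrt r * xs + z))
        / psbZ ν r (Real.sqrt r * xs + z)) (gaussianReal 0 1) :=
      Integrable.mono' hgint hmeas (Filter.Eventually.of_forall hbd)
    refine ⟨hint, ?_⟩
    have h4 : |∫ z, psbZ ν r (-(Real.sqrt r * xs + z)) / psbZ ν r (Real.sqrt r * xs + z)
          ∂(gaussianReal 0 1)|
        ≤ ∫ z, Real.exp (2 * (Real.sqrt r * K) * (Real.sqrt r * |xs|) + r / 2 * K ^ 2)
            * (Real.exp (2 * (Real.sqrt r * K) * z) + Real.exp (-(2 * (Real.sqrt r * K)) * z))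
            ∂(gaussianReal 0 1) := by
      rw [← Real.norm_eq_abs]
      exact norm_integral_le_of_norm_le hgint (Filter.Eventually.of_forall hbd)
    refine h4.trans ?_
    rw [integral_const_mul, integral_add (psb_integrable_exp _) (psb_integrable_exp _),
      psb_gauss_mgf, psb_gauss_mgf]
    have : (-(2 * (Real.sqrt r * K))) ^ 2 = (2 * (Real.sqrt r * K)) ^ 2 := by ring
    rw [this]
    nlinarith [Real.exp_pos ((2 * (Real.sqrt r * K)) ^ 2 / 2)]
  -- pointwise (in xs) comparison
  have hstep : ∀ xs : ℝ,
      (∫ z, Real.log (psbZ ν r (-(Real.sqrt r * xs + z))) ∂(gaussianReal 0 1))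
        - (∫ z, Real.log (psbZ ν r (Real.sqrt r * xs + z)) ∂(gaussianReal 0 1))
      ≤ (∫ z, psbZ ν r (-(Real.sqrt r * xs + z)) / psbZ ν r (Real.sqrt r * xs + z)
          ∂(gaussianReal 0 1)) - 1 := by
    intro xs
    rw [← integral_sub (hIm xs).1 (hIp xs).1]
    have h2 : (∫ z, psbZ ν r (-(Real.sqrt r * xs + z)) / psbZ ν r (Real.sqrt r * xs + z)
          ∂(gaussianReal 0 1)) - 1
        = ∫ z, (psbZ ν r (-(Real.sqrt r * xs + z)) / psbZ ν r (Real.sqrt r * xs + z) - 1)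
            ∂(gaussianReal 0 1) := by
      rw [integral_sub (hW xs).1 (integrable_const 1), integral_const]
      simp [measure_univ]
    rw [h2]
    refine integral_mono_ae ((hIm xs).1.sub (hIp xs).1) ((hW xs).1.sub (integrable_const 1))
      (Filter.Eventually.of_forall fun z => ?_)
    have hp1 : 0 < psbZ ν r (-(Real.sqrt r * xs + z)) := psbZ_pos hr hK hsupp _
    have hp2 : 0 < psbZ ν r (Real.sqrt r * xs + z) := psbZ_pos hr hK hsupp _
    have h := Real.log_le_sub_one_of_pos (div_pos hp1 hp2)
    rw [Real.log_div hp1.ne' hp2.ne'] at h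
    simpa using h
  -- outer integrability
  have hM0 : 0 ≤ ∫ z, |z| ∂(gaussianReal 0 1) := integral_nonneg fun z => abs_nonneg z
  have hsmZ : ∀ ε : ℝ, StronglyMeasurable fun xs : ℝ =>
      ∫ z, Real.log (psbZ ν r (ε * (Real.sqrt r * xs + z))) ∂(gaussianReal 0 1) := by
    intro ε
    exact ((Real.measurable_log.comp ((psb_sm_Z ν r).measurable.comp
      (by fun_prop : Measurable fun p : ℝ × ℝ =>
        ε * (Real.sqrt r * p.1 + p.2)))).stronglyMeasurable).integral_prod_right'
  have habs_bound : ∀ xs : ℝ, |xs| ≤ K →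
      Real.sqrt r * K * (|Real.sqrt r * xs| + ∫ z, |z| ∂(gaussianReal 0 1)) + r / 2 * K ^ 2
      ≤ Real.sqrt r * K * (Real.sqrt r * K + ∫ z, |z| ∂(gaussianReal 0 1)) + r / 2 * K ^ 2 := by
    intro xs hxs
    have h1 : |Real.sqrt r * xs| ≤ Real.sqrt r * K := by
      rw [abs_mul, abs_of_nonneg (Real.sqrt_nonneg r)]
      exact mul_le_mul_of_nonneg_left hxs (Real.sqrt_nonneg r)
    nlinarith
  have hAp : Integrable (fun xs =>
      ∫ z, Real.log (psbZ ν r (Real.sqrt r * xs + z)) ∂(gaussianReal 0 1)) ν := by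
    refine Integrable.mono' (g := fun _ =>
        Real.sqrt r * K * (Real.sqrt r * K + ∫ z, |z| ∂(gaussianReal 0 1)) + r / 2 * K ^ 2)
      (integrable_const _) ?_ ?_
    · have h := hsmZ 1
      simp only [one_mul] at h
      exact h.aestronglyMeasurable
    · filter_upwards [hsupp] with xs hxs
      exact le_trans ((hIp xs).2) (habs_bound xs hxs)
  have hAm : Integrable (fun xs =>
      ∫ z, Real.log (psbZ ν r (-(Real.sqrt r * xs + z))) ∂(gaussianReal 0 1)) ν := by
    refine Integrable.mono' (g := fun _ =>
        Real.sqrt r * K * (Real.sqrt r * K + ∫ z, |z| ∂(gaussianReal 0 1)) + r / 2 * K ^ 2)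
      (integrable_const _) ?_ ?_
    · have h := hsmZ (-1)
      simp only [neg_one_mul, neg_add_rev] at h
      refine h.aestronglyMeasurable.congr (Filter.Eventually.of_forall fun xs => ?_)
      refine integral_congr_ae (Filter.Eventually.of_forall fun z => ?_)
      refine congrArg Real.log (congrArg (psbZ ν r) ?_)
      ring
    · filter_upwards [hsupp] with xs hxs
      exact le_trans ((hIm xs).2) (habs_bound xs hxs)
  have hWi : Integrable (fun xs =>
      ∫ z, psbZ ν r (-(Real.sqrt r * xs + z)) / psbZ ν r (Real.sqrt r * xs + z)
        ∂(gaussianReal 0 1)) ν := by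
    refine Integrable.mono' (g := fun _ =>
        Real.exp (2 * (Real.sqrt r * K) * (Real.sqrt r * K) + r / 2 * K ^ 2)
          * (2 * Real.exp ((2 * (Real.sqrt r * K)) ^ 2 / 2)))
      (integrable_const _) ?_ ?_
    · exact (((psb_meas_ratio ν r).comp (by fun_prop : Measurable fun p : ℝ × ℝ =>
        Real.sqrt r * p.1 + p.2)).stronglyMeasurable).integral_prod_right'.aestronglyMeasurable
    · filter_upwards [hsupp] with xs hxs
      refine le_trans ((hW xs).2) ?_
      have h1 : Real.sqrt r * |xs| ≤ Real.sqrt r * K :=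
        mul_le_mul_of_nonneg_left hxs (Real.sqrt_nonneg r)
      have ht : 0 ≤ 2 * (Real.sqrt r * K) := by positivity
      have h2 : Real.exp (2 * (Real.sqrt r * K) * (Real.sqrt r * |xs|) + r / 2 * K ^ 2)
          ≤ Real.exp (2 * (Real.sqrt r * K) * (Real.sqrt r * K) + r / 2 * K ^ 2) := by
        refine Real.exp_le_exp.mpr ?_
        nlinarith [mul_le_mul_of_nonneg_left h1 ht]
      have h3 : 0 < 2 * Real.exp ((2 * (Real.sqrt r * K)) ^ 2 / 2) := by positivity
      nlinarith
  -- final assembly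
  rw [hminus, hplus]
  have h1 : (∫ xs, (∫ z, Real.log (psbZ ν r (-(Real.sqrt r * xs + z)))
          ∂(gaussianReal 0 1)) ∂ν)
        - (∫ xs, (∫ z, Real.log (psbZ ν r (Real.sqrt r * xs + z)) ∂(gaussianReal 0 1)) ∂ν)
      = ∫ xs, ((∫ z, Real.log (psbZ ν r (-(Real.sqrt r * xs + z))) ∂(gaussianReal 0 1))
        - (∫ z, Real.log (psbZ ν r (Real.sqrt r * xs + z)) ∂(gaussianReal 0 1))) ∂ν :=
    (integral_sub hAm hAp).symm
  have h2 : ∫ xs, ((∫ z, Real.log (psbZ ν r (-(Real.sqrt r * xs + z))) ∂(gaussianReal 0 1))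
        - (∫ z, Real.log (psbZ ν r (Real.sqrt r * xs + z)) ∂(gaussianReal 0 1))) ∂ν
      ≤ ∫ xs, ((∫ z, psbZ ν r (-(Real.sqrt r * xs + z)) / psbZ ν r (Real.sqrt r * xs + z)
          ∂(gaussianReal 0 1)) - 1) ∂ν :=
    integral_mono_ae (hAm.sub hAp) (hWi.sub (integrable_const 1))
      (Filter.Eventually.of_forall hstep)
  have h3 : ∫ xs, ((∫ z, psbZ ν r (-(Real.sqrt r * xs + z)) / psbZ ν r (Real.sqrt r * xs + z)
          ∂(gaussianReal 0 1)) - 1) ∂ν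
      = (∫ xs, (∫ z, psbZ ν r (-(Real.sqrt r * xs + z)) / psbZ ν r (Real.sqrt r * xs + z)
          ∂(gaussianReal 0 1)) ∂ν) - 1 := by
    rw [integral_sub hWi (integrable_const 1), integral_const]
    simp [measure_univ]
  have h4 := psb_intW_eq_one hr hK hsupp
  linarith
end

section
/- Let μ be the symmetric part of a bounded-support probability measure ν on ℝ, ρ_t = (1−t)μ + tν for t ∈ [0,1], and define φ(t) = φ⁺(t) − φ⁻(t) where φ^±(t) = E_z ∫ (log ∫ exp(√r z x ± r x x* − (r/2)x²) dρ_t(x)) dρ_t(x*), with z ∼ N(0,1) and r > 0 fixed. Then φ(0) = 0 and φ'(0) = 0. -/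
/-!
Write `L_m(z, x*) = log ∫ exp (√r z x + r x x* - r x² / 2) dm(x)`. The integrand
`L_{ρ_t}(z, x*) - L_{ρ_t}(z, -x*)` of `φ` is odd in `x*` and `μ` is symmetric, so only the `t ν` part
of `ρ_t` survives: `φ(t) = t G(t)` with `G(t) = E_z ∫ (L_{ρ_t}(z, x*) - L_{ρ_t}(z, -x*)) dν(x*)`.
The symmetry of `μ` also gives `L_μ(z, -x*) = L_μ(-z, x*)`, so `G(0) = 0` by the symmetry of the
Gaussian. Finally, for `|x*| ≤ K` the partition functions lie in `[e^{-c(z)}, e^{c(z)}]` with `c`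
affine in `|z|`, where `log` is `e^{c(z)}`-Lipschitz; hence `|L_{ρ_t} - L_μ| ≤ t e^{2c(z)}`, which is
Gaussian-integrable, so `|G(t)| = O(t)` and `|φ(t)| = O(t²)`.
-/

open MeasureTheory ProbabilityTheory Set
open scoped ENNReal NNReal
open Real Filter Topology Asymptotics

lemma abs_log_sub_log_le_div {m a b : ℝ} (hm : 0 < m) (ha : m ≤ a) (hb : m ≤ b) :
    |log a - log b| ≤ |a - b| / m := by
  wlog h : b ≤ a generalizing a b
  · rw [abs_sub_comm, abs_sub_comm a b]
    exact this hb ha (le_of_not_ge h)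
  have ha0 : 0 < a := hm.trans_le ha
  have hb0 : 0 < b := hm.trans_le hb
  rw [abs_of_nonneg (sub_nonneg.2 (log_le_log hb0 h)), abs_of_nonneg (sub_nonneg.2 h),
    ← log_div ha0.ne' hb0.ne']
  calc log (a / b) ≤ a / b - 1 := log_le_sub_one_of_pos (div_pos ha0 hb0)
    _ = (a - b) / b := by field_simp
    _ ≤ (a - b) / m := by gcongr

lemma abs_log_le_of_mem_Icc {a c : ℝ} (ha : a ∈ Icc (exp (-c)) (exp c)) : |log a| ≤ c := by
  have ha0 : 0 < a := (exp_pos _).trans_le ha.1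
  rw [abs_le]
  constructor
  · simpa using log_le_log (exp_pos _) ha.1
  · simpa using log_le_log ha0 ha.2

lemma abs_log_convex_comb_sub_log_le {a b c t : ℝ} (ha : a ∈ Icc (exp (-c)) (exp c))
    (hb : b ∈ Icc (exp (-c)) (exp c)) (ht : t ∈ Icc (0 : ℝ) 1) :
    |log ((1 - t) * a + t * b) - log a| ≤ t * exp (2 * c) := by
  obtain ⟨ha₁, ha₂⟩ := ha
  obtain ⟨hb₁, hb₂⟩ := hb
  obtain ⟨ht₀, ht₁⟩ := ht
  have hc : 0 < exp (-c) := exp_pos _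
  have hmix : exp (-c) ≤ (1 - t) * a + t * b := by nlinarith
  have hba : |b - a| ≤ exp c := abs_sub_le_iff.2 ⟨by linarith, by linarith⟩
  calc |log ((1 - t) * a + t * b) - log a| ≤ |(1 - t) * a + t * b - a| / exp (-c) :=
        abs_log_sub_log_le_div hc hmix ha₁
    _ = t * |b - a| / exp (-c) := by
        rw [show (1 - t) * a + t * b - a = t * (b - a) by ring, abs_mul, abs_of_nonneg ht₀]
    _ ≤ t * exp c / exp (-c) := by gcongr
    _ = t * exp (2 * c) := by rw [mul_div_assoc, ← exp_sub]; ring_nf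

lemma hasDerivWithinAt_zero_of_abs_le_mul_sq {f : ℝ → ℝ} {s : Set ℝ} {C : ℝ} (h₀ : f 0 = 0)
    (h : ∀ t ∈ s, |f t| ≤ C * t ^ 2) : HasDerivWithinAt f 0 s 0 := by
  rw [hasDerivWithinAt_iff_isLittleO]
  simp only [h₀, sub_zero, smul_zero]
  have hO : f =O[𝓝[s] 0] fun t => t ^ 2 :=
    IsBigO.of_bound C <| eventually_nhdsWithin_of_forall fun t ht => by
      simpa using h t ht
  exact hO.trans_isLittleO ((isLittleO_pow_id one_lt_two).mono nhdsWithin_le_nhds)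

instance isNegInvariant_gaussianReal (v : ℝ≥0) : (gaussianReal 0 v).IsNegInvariant :=
  ⟨by rw [Measure.neg_def]; simpa using gaussianReal_map_neg (μ := 0) (v := v)⟩

lemma integral_sub_comp_neg_eq_zero {G : Type*} [MeasurableSpace G] [AddGroup G]
    [MeasurableNeg G] {μ : Measure G} [μ.IsNegInvariant] {f : G → ℝ} (hf : Integrable f μ) :
    ∫ x, (f x - f (-x)) ∂μ = 0 := by
  rw [integral_sub hf hf.comp_neg, integral_neg_eq_self, sub_self]

section Symmetrization

variable {G : Type*} [MeasurableSpace G] [InvolutiveNeg G] [MeasurableNeg G] (ν : Measure G)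

instance isNegInvariant_symmetrization :
    ((2 : ℝ≥0∞)⁻¹ • (ν + ν.map (fun x => -x))).IsNegInvariant := by
  refine ⟨?_⟩
  rw [Measure.neg_def, Measure.map_smul, Measure.map_add _ _ measurable_neg,
    Measure.map_map measurable_neg measurable_neg]
  simp only [Function.comp_def, neg_neg, Measure.map_id', add_comm]

instance isProbabilityMeasure_symmetrization [IsProbabilityMeasure ν] :
    IsProbabilityMeasure ((2 : ℝ≥0∞)⁻¹ • (ν + ν.map (fun x => -x))) := by
  refine ⟨?_⟩
  simp [Measure.map_apply measurable_neg MeasurableSet.univ, ENNReal.inv_two_add_inv_two]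

end Symmetrization

lemma ae_abs_le_symmetrization {ν : Measure ℝ} {K : ℝ} (hν : ∀ᵐ x ∂ν, |x| ≤ K) :
    ∀ᵐ x ∂(2 : ℝ≥0∞)⁻¹ • (ν + ν.map (fun x => -x)), |x| ≤ K := by
  refine Measure.ae_smul_measure (ae_add_measure_iff.2 ⟨hν, ?_⟩) _
  rw [ae_map_iff measurable_neg.aemeasurable (measurableSet_le (by fun_prop) (by fun_prop))]
  simpa using hν

section Mixture

variable {α : Type*} [MeasurableSpace α]

noncomputable def mixture (μ ν : Measure α) (t : ℝ) : Measure α :=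
  ENNReal.ofReal (1 - t) • μ + ENNReal.ofReal t • ν

variable {μ ν : Measure α} {t : ℝ}

lemma isProbabilityMeasure_mixture [IsProbabilityMeasure μ] [IsProbabilityMeasure ν]
    (ht : t ∈ Icc (0 : ℝ) 1) : IsProbabilityMeasure (mixture μ ν t) := by
  refine ⟨?_⟩
  rw [mixture, Measure.add_apply, Measure.smul_apply, Measure.smul_apply, measure_univ,
    measure_univ, smul_eq_mul, smul_eq_mul, mul_one, mul_one,
    ← ENNReal.ofReal_add (by linarith [ht.2]) ht.1]
  simp

lemma ae_mixture {p : α → Prop} (hμ : ∀ᵐ x ∂μ, p x) (hν : ∀ᵐ x ∂ν, p x) :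
    ∀ᵐ x ∂mixture μ ν t, p x :=
  ae_add_measure_iff.2 ⟨Measure.ae_smul_measure hμ _, Measure.ae_smul_measure hν _⟩

lemma integral_mixture (ht : t ∈ Icc (0 : ℝ) 1) {f : α → ℝ} (hμ : Integrable f μ)
    (hν : Integrable f ν) :
    ∫ x, f x ∂mixture μ ν t = (1 - t) * ∫ x, f x ∂μ + t * ∫ x, f x ∂ν := by
  rw [mixture, integral_add_measure (hμ.smul_measure ENNReal.ofReal_ne_top)
      (hν.smul_measure ENNReal.ofReal_ne_top), integral_smul_measure, integral_smul_measure,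
    ENNReal.toReal_ofReal (by linarith [ht.2]), ENNReal.toReal_ofReal ht.1, smul_eq_mul,
    smul_eq_mul]

end Mixture

lemma integrable_exp_of_abs_le {α : Type*} [MeasurableSpace α] {m : Measure α}
    [IsFiniteMeasure m] {f : α → ℝ} {c : ℝ} (hf : AEStronglyMeasurable f m)
    (hfc : ∀ᵐ x ∂m, |f x| ≤ c) : Integrable (fun x => exp (f x)) m :=
  .of_bound (continuous_exp.comp_aestronglyMeasurable hf) (exp c) <| by
    filter_upwards [hfc] with x hx
    rw [norm_of_nonneg (exp_pos _).le]
    exact exp_le_exp.2 (le_of_abs_le hx)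

lemma integral_exp_mem_Icc {α : Type*} [MeasurableSpace α] {m : Measure α}
    [IsProbabilityMeasure m] {f : α → ℝ} {c : ℝ} (hf : AEStronglyMeasurable f m)
    (hfc : ∀ᵐ x ∂m, |f x| ≤ c) : ∫ x, exp (f x) ∂m ∈ Icc (exp (-c)) (exp c) := by
  have hint := integrable_exp_of_abs_le hf hfc
  constructor
  · calc exp (-c) = ∫ _, exp (-c) ∂m := by simp
      _ ≤ ∫ x, exp (f x) ∂m := integral_mono_ae (integrable_const _) hint <| by
          filter_upwards [hfc] with x hx using exp_le_exp.2 (neg_le_of_abs_le hx)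
  · calc ∫ x, exp (f x) ∂m ≤ ∫ _, exp c ∂m := integral_mono_ae hint (integrable_const _) <| by
          filter_upwards [hfc] with x hx using exp_le_exp.2 (le_of_abs_le hx)
      _ = exp c := by simp

/-- The inner integrand of `φ⁺` at `x* = xs`, and of `φ⁻` at `x* = -xs`. -/
noncomputable def logPartition (m : Measure ℝ) (r z xs : ℝ) : ℝ :=
  log (∫ x, exp (√r * z * x + r * x * xs - r / 2 * x ^ 2) ∂m)

noncomputable def exponentBound (r K z : ℝ) : ℝ :=
  √r * |z| * K + 3 / 2 * |r| * K ^ 2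

section LogPartition

variable {m : Measure ℝ} {r K z xs : ℝ}

lemma abs_exponent_le {x : ℝ} (hxs : |xs| ≤ K) (hx : |x| ≤ K) :
    |√r * z * x + r * x * xs - r / 2 * x ^ 2| ≤ exponentBound r K z := by
  have hK : 0 ≤ K := (abs_nonneg x).trans hx
  have h₁ : |√r * z * x| ≤ √r * |z| * K := by
    rw [abs_mul, abs_mul, abs_of_nonneg (sqrt_nonneg r)]
    gcongr
  have h₂ : |r * x * xs| ≤ |r| * K ^ 2 := by
    rw [abs_mul, abs_mul, sq, ← mul_assoc]
    gcongr
  have h₃ : |r / 2 * x ^ 2| ≤ |r| / 2 * K ^ 2 := by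
    rw [abs_mul, abs_div, abs_two, abs_pow]
    gcongr
  calc |√r * z * x + r * x * xs - r / 2 * x ^ 2|
      ≤ |√r * z * x| + |r * x * xs| + |r / 2 * x ^ 2| :=
        (abs_sub _ _).trans (add_le_add_left (abs_add_le _ _) _)
    _ ≤ exponentBound r K z := by rw [exponentBound]; linarith

lemma integral_exp_exponent_mem_Icc [IsProbabilityMeasure m] (hm : ∀ᵐ x ∂m, |x| ≤ K)
    (hxs : |xs| ≤ K) :
    ∫ x, exp (√r * z * x + r * x * xs - r / 2 * x ^ 2) ∂m
      ∈ Icc (exp (-exponentBound r K z)) (exp (exponentBound r K z)) :=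
  integral_exp_mem_Icc (by fun_prop) (by filter_upwards [hm] with x hx using abs_exponent_le hxs hx)

lemma abs_logPartition_le [IsProbabilityMeasure m] (hm : ∀ᵐ x ∂m, |x| ≤ K) (hxs : |xs| ≤ K) :
    |logPartition m r z xs| ≤ exponentBound r K z :=
  abs_log_le_of_mem_Icc (integral_exp_exponent_mem_Icc hm hxs)

lemma abs_logPartition_sub_neg_le [IsProbabilityMeasure m] (hm : ∀ᵐ x ∂m, |x| ≤ K)
    (hxs : |xs| ≤ K) :
    |logPartition m r z xs - logPartition m r z (-xs)| ≤ 2 * exponentBound r K z := by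
  have h₁ := abs_logPartition_le (r := r) (z := z) hm hxs
  have h₂ := abs_logPartition_le (r := r) (z := z) hm (xs := -xs) (by rwa [abs_neg])
  linarith [abs_sub (logPartition m r z xs) (logPartition m r z (-xs))]

lemma logPartition_neg [m.IsNegInvariant] : logPartition m r z (-xs) = logPartition m r (-z) xs := by
  rw [logPartition, logPartition, ← integral_neg_eq_self]
  congr 2 with x
  ring_nf

@[fun_prop]
lemma Measurable.logPartition {α : Type*} [MeasurableSpace α] [SFinite m] {f g : α → ℝ}
    (hf : Measurable f) (hg : Measurable g) : Measurable fun a => logPartition m r (f a) (g a) := by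
  have h : StronglyMeasurable fun p : ℝ × ℝ =>
      ∫ x, exp (√r * p.1 * x + r * x * p.2 - r / 2 * x ^ 2) ∂m :=
    StronglyMeasurable.integral_prod_right'
      (f := fun q : (ℝ × ℝ) × ℝ => exp (√r * q.1.1 * q.2 + r * q.2 * q.1.2 - r / 2 * q.2 ^ 2))
      (by fun_prop)
  exact measurable_log.comp (h.measurable.comp (hf.prodMk hg))

lemma abs_logPartition_mixture_sub_le {μ ν : Measure ℝ} [IsProbabilityMeasure μ]
    [IsProbabilityMeasure ν] (hμ : ∀ᵐ x ∂μ, |x| ≤ K) (hν : ∀ᵐ x ∂ν, |x| ≤ K) {t : ℝ}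
    (ht : t ∈ Icc (0 : ℝ) 1) (hxs : |xs| ≤ K) :
    |logPartition (mixture μ ν t) r z xs - logPartition μ r z xs|
      ≤ t * exp (2 * exponentBound r K z) := by
  have hbound (x) (hx : |x| ≤ K) := abs_exponent_le (r := r) (z := z) hxs hx
  rw [logPartition, logPartition, integral_mixture ht
    (integrable_exp_of_abs_le (by fun_prop) (hμ.mono hbound))
    (integrable_exp_of_abs_le (by fun_prop) (hν.mono hbound))]
  exact abs_log_convex_comb_sub_log_le (integral_exp_exponent_mem_Icc hμ hxs)
    (integral_exp_exponent_mem_Icc hν hxs) ht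

end LogPartition

section IteratedIntegral

variable {α β : Type*} [MeasurableSpace α] [MeasurableSpace β] {γ : Measure α} {m : Measure β}
  [IsProbabilityMeasure m] {F G : α → β → ℝ} {C : α → ℝ}

lemma integrable_integral_of_abs_le (hF : Measurable fun p : α × β => F p.1 p.2)
    (hC : Integrable C γ) (hFC : ∀ z, ∀ᵐ y ∂m, |F z y| ≤ C z) :
    Integrable (fun z => ∫ y, F z y ∂m) γ :=
  hC.mono' hF.stronglyMeasurable.integral_prod_right'.aestronglyMeasurable <|
    ae_of_all _ fun z => (norm_integral_le_of_norm_le_const (hFC z)).trans (by simp)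

lemma integral_integral_sub_of_abs_le (hF : Measurable fun p : α × β => F p.1 p.2)
    (hG : Measurable fun p : α × β => G p.1 p.2) (hC : Integrable C γ)
    (hFC : ∀ z, ∀ᵐ y ∂m, |F z y| ≤ C z) (hGC : ∀ z, ∀ᵐ y ∂m, |G z y| ≤ C z) :
    ∫ z, ∫ y, F z y ∂m ∂γ - ∫ z, ∫ y, G z y ∂m ∂γ = ∫ z, ∫ y, (F z y - G z y) ∂m ∂γ := by
  rw [← integral_sub (integrable_integral_of_abs_le hF hC hFC)
    (integrable_integral_of_abs_le hG hC hGC)]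
  refine integral_congr_ae (ae_of_all _ fun z => (integral_sub ?_ ?_).symm)
  · exact .of_bound (hF.comp measurable_prodMk_left).aestronglyMeasurable (C z) (hFC z)
  · exact .of_bound (hG.comp measurable_prodMk_left).aestronglyMeasurable (C z) (hGC z)

end IteratedIntegral

lemma integrable_exponentBound (r K : ℝ) : Integrable (exponentBound r K) (gaussianReal 0 1) :=
  ((((memLp_id_gaussianReal 1).integrable le_rfl).abs.const_mul √r).mul_const K).add
    (integrable_const _)

lemma integrable_exp_two_mul_exponentBound (r K : ℝ) :
    Integrable (fun z => exp (2 * exponentBound r K z)) (gaussianReal 0 1) := by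
  have h := integrable_exp_mul_abs (X := id) (μ := gaussianReal 0 1) (t := 2 * √r * K)
    (integrable_exp_mul_gaussianReal _) (integrable_exp_mul_gaussianReal _)
  refine (h.const_mul (exp (3 * |r| * K ^ 2))).congr (ae_of_all _ fun z => ?_)
  simp only [exponentBound, id, ← exp_add]
  ring_nf

noncomputable def meanOddLogPartition (m m' : Measure ℝ) (r : ℝ) : ℝ :=
  ∫ z, ∫ xs, (logPartition m r z xs - logPartition m r z (-xs)) ∂m' ∂gaussianReal 0 1

section Interpolation

variable {μ ν : Measure ℝ} [IsProbabilityMeasure μ] [IsProbabilityMeasure ν] [μ.IsNegInvariant]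
  {K r t : ℝ} (hμ : ∀ᵐ x ∂μ, |x| ≤ K) (hν : ∀ᵐ x ∂ν, |x| ≤ K)

include hμ hν

lemma integral_logPartition_sub_neg_mixture (ht : t ∈ Icc (0 : ℝ) 1) :
    ∫ z, ∫ xs, logPartition (mixture μ ν t) r z xs ∂mixture μ ν t ∂gaussianReal 0 1
      - ∫ z, ∫ xs, logPartition (mixture μ ν t) r z (-xs) ∂mixture μ ν t ∂gaussianReal 0 1
      = t * meanOddLogPartition (mixture μ ν t) ν r := by
  have := isProbabilityMeasure_mixture (μ := μ) (ν := ν) ht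
  have hρ : ∀ᵐ x ∂mixture μ ν t, |x| ≤ K := ae_mixture hμ hν
  have hbound {m' : Measure ℝ} (hm' : ∀ᵐ x ∂m', |x| ≤ K) (z : ℝ) :
      ∀ᵐ xs ∂m', |logPartition (mixture μ ν t) r z xs| ≤ exponentBound r K z :=
    hm'.mono fun xs hxs => abs_logPartition_le hρ hxs
  have hodd {m' : Measure ℝ} [IsFiniteMeasure m'] (hm' : ∀ᵐ x ∂m', |x| ≤ K) (z : ℝ) :
      Integrable (fun xs => logPartition (mixture μ ν t) r z xs
        - logPartition (mixture μ ν t) r z (-xs)) m' :=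
    .of_bound (by fun_prop) _ (hm'.mono fun xs hxs => abs_logPartition_sub_neg_le hρ hxs)
  rw [integral_integral_sub_of_abs_le (by fun_prop) (by fun_prop) (integrable_exponentBound r K)
      (hbound hρ)
      (fun z => hρ.mono fun xs hxs => abs_logPartition_le hρ (by rwa [abs_neg])),
    meanOddLogPartition, ← integral_const_mul]
  refine integral_congr_ae (ae_of_all _ fun z => ?_)
  dsimp only
  rw [integral_mixture ht (hodd hμ z) (hodd hν z),
    integral_sub_comp_neg_eq_zero (.of_bound (by fun_prop) _ (hbound hμ z))]
  ring

lemma meanOddLogPartition_eq_zero : meanOddLogPartition μ ν r = 0 := by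
  have hbound (z : ℝ) : ∀ᵐ xs ∂ν, |logPartition μ r z xs| ≤ exponentBound r K z :=
    hν.mono fun xs hxs => abs_logPartition_le hμ hxs
  have h := integral_integral_sub_of_abs_le (γ := gaussianReal 0 1)
    (F := fun z xs => logPartition μ r z xs) (G := fun z xs => logPartition μ r (-z) xs)
    (by fun_prop) (by fun_prop) (integrable_exponentBound r K) hbound
    (fun z => by simpa [exponentBound] using hbound (-z))
  rw [integral_neg_eq_self (fun z => ∫ xs, logPartition μ r z xs ∂ν), sub_self] at h
  simp_rw [meanOddLogPartition, logPartition_neg]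
  exact h.symm

lemma abs_meanOddLogPartition_mixture_le (ht : t ∈ Icc (0 : ℝ) 1) :
    |meanOddLogPartition (mixture μ ν t) ν r|
      ≤ 2 * t * ∫ z, exp (2 * exponentBound r K z) ∂gaussianReal 0 1 := by
  have := isProbabilityMeasure_mixture (μ := μ) (ν := ν) ht
  have hodd {m : Measure ℝ} [IsProbabilityMeasure m] (hm : ∀ᵐ x ∂m, |x| ≤ K) (z : ℝ) :
      ∀ᵐ xs ∂ν, |logPartition m r z xs - logPartition m r z (-xs)| ≤ 2 * exponentBound r K z :=
    hν.mono fun xs hxs => abs_logPartition_sub_neg_le hm hxs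
  have h0 : |meanOddLogPartition (mixture μ ν t) ν r|
      = |meanOddLogPartition (mixture μ ν t) ν r - meanOddLogPartition μ ν r| := by
    rw [meanOddLogPartition_eq_zero hμ hν, sub_zero]
  rw [h0, meanOddLogPartition, meanOddLogPartition, integral_integral_sub_of_abs_le (by fun_prop)
      (by fun_prop) ((integrable_exponentBound r K).const_mul 2) (hodd (ae_mixture hμ hν))
      (hodd hμ), ← integral_const_mul, ← Real.norm_eq_abs]
  refine norm_integral_le_of_norm_le ((integrable_exp_two_mul_exponentBound r K).const_mul _)
    (ae_of_all _ fun z => (norm_integral_le_of_norm_le_const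
      (C := 2 * t * exp (2 * exponentBound r K z)) (hν.mono fun xs hxs => ?_)).trans_eq (by simp))
  have hdiff (xs : ℝ) (hxs : |xs| ≤ K) :=
    abs_logPartition_mixture_sub_le (r := r) (z := z) hμ hν ht hxs
  rw [Real.norm_eq_abs]
  calc _ = |(logPartition (mixture μ ν t) r z xs - logPartition μ r z xs)
          - (logPartition (mixture μ ν t) r z (-xs) - logPartition μ r z (-xs))| := by ring_nf
    _ ≤ t * exp (2 * exponentBound r K z) + t * exp (2 * exponentBound r K z) :=
        (abs_sub _ _).trans (add_le_add (hdiff xs hxs) (hdiff (-xs) (by rwa [abs_neg])))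
    _ = 2 * t * exp (2 * exponentBound r K z) := by ring

end Interpolation

theorem stmt_9_general
    (ν : Measure ℝ) [IsProbabilityMeasure ν] (K : ℝ)
    (hsupp : ∀ᵐ x ∂ν, |x| ≤ K)
    (μ : Measure ℝ)
    (hμ : μ = (2 : ℝ≥0∞)⁻¹ • (ν + Measure.map (fun x => -x) ν))
    (ρ : ℝ → Measure ℝ)
    (hρ : ∀ t, ρ t = ENNReal.ofReal (1 - t) • μ + ENNReal.ofReal t • ν)
    (r : ℝ)
    (φp φm φ : ℝ → ℝ)
    (hφp : ∀ t, φp t = ∫ z, ∫ xs,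
      Real.log (∫ x, Real.exp (Real.sqrt r * z * x + r * x * xs - r / 2 * x ^ 2) ∂(ρ t))
        ∂(ρ t) ∂(gaussianReal 0 1))
    (hφm : ∀ t, φm t = ∫ z, ∫ xs,
      Real.log (∫ x, Real.exp (Real.sqrt r * z * x - r * x * xs - r / 2 * x ^ 2) ∂(ρ t))
        ∂(ρ t) ∂(gaussianReal 0 1))
    (hφ : ∀ t, φ t = φp t - φm t) :
    φ 0 = 0 ∧ HasDerivWithinAt φ 0 (Set.Icc (0 : ℝ) 1) 0 := by
  have : IsProbabilityMeasure μ := hμ ▸ inferInstance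
  have : μ.IsNegInvariant := hμ ▸ inferInstance
  have hμK : ∀ᵐ x ∂μ, |x| ≤ K := hμ ▸ ae_abs_le_symmetrization hsupp
  obtain rfl : ρ = mixture μ ν := funext hρ
  set E := ∫ z, exp (2 * exponentBound r K z) ∂gaussianReal 0 1
  have hφ_le (t : ℝ) (ht : t ∈ Icc (0 : ℝ) 1) : |φ t| ≤ 2 * E * t ^ 2 := by
    have hφp' : φp t = ∫ z, ∫ xs, logPartition (mixture μ ν t) r z xs
        ∂mixture μ ν t ∂gaussianReal 0 1 := hφp t
    have hφm' : φm t = ∫ z, ∫ xs, logPartition (mixture μ ν t) r z (-xs)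
        ∂mixture μ ν t ∂gaussianReal 0 1 := by
      simp only [hφm, logPartition, mul_neg, ← sub_eq_add_neg]
    rw [hφ, hφp', hφm', integral_logPartition_sub_neg_mixture hμK hsupp ht,
      abs_mul, abs_of_nonneg ht.1]
    calc t * |meanOddLogPartition (mixture μ ν t) ν r| ≤ t * (2 * t * E) :=
          mul_le_mul_of_nonneg_left (abs_meanOddLogPartition_mixture_le hμK hsupp ht) ht.1
      _ = 2 * E * t ^ 2 := by ring
  have hφ0 : φ 0 = 0 := abs_nonpos_iff.1 (by simpa using hφ_le 0 (left_mem_Icc.2 zero_le_one))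
  exact ⟨hφ0, hasDerivWithinAt_zero_of_abs_le_mul_sq hφ0 hφ_le⟩

/-- Along the Franz–Parisi interpolation `ρ_t = (1−t)μ + tν` between the
symmetrization `μ` of `ν` and `ν`, the function `φ = φ⁺ − φ⁻` satisfies
`φ(0) = 0` and `φ'(0) = 0`. -/
theorem stmt_9
    (ν : Measure ℝ) [IsProbabilityMeasure ν] (K : ℝ) (hK : 0 < K)
    (hsupp : ∀ᵐ x ∂ν, |x| ≤ K)
    (μ : Measure ℝ)
    (hμ : μ = (2 : ℝ≥0∞)⁻¹ • (ν + Measure.map (fun x => -x) ν))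
    (ρ : ℝ → Measure ℝ)
    (hρ : ∀ t, ρ t = ENNReal.ofReal (1 - t) • μ + ENNReal.ofReal t • ν)
    (r : ℝ) (hr : 0 < r)
    (φp φm φ : ℝ → ℝ)
    (hφp : ∀ t, φp t = ∫ z, ∫ xs,
      Real.log (∫ x, Real.exp (Real.sqrt r * z * x + r * x * xs - r / 2 * x ^ 2) ∂(ρ t))
        ∂(ρ t) ∂(gaussianReal 0 1))
    (hφm : ∀ t, φm t = ∫ z, ∫ xs,
      Real.log (∫ x, Real.exp (Real.sqrt r * z * x - r * x * xs - r / 2 * x ^ 2) ∂(ρ t))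
        ∂(ρ t) ∂(gaussianReal 0 1))
    (hφ : ∀ t, φ t = φp t - φm t) :
    φ 0 = 0 ∧ HasDerivWithinAt φ 0 (Set.Icc (0 : ℝ) 1) 0 :=
  stmt_9_general ν K hsupp μ hμ ρ hρ r φp φm φ hφp hφm hφ
end
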